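/- arXiv:2207.08447 — 3 statements merged into one kernel-verified Lean document; each statement's English description precedes it below -/
import Mathlib

section
/- Let l ∈ {0,1,2}. There exists θ₀ ∈ (π/2, π) such that for every θ ∈ (π/2, θ₀) there is a constant c > 0 with the following property: for every τ > 0 and every z ∈ Σ_θ with |Im z| ≤ π/τ, | (γ_l(e^{−zτ})/l!) · τ^{l+1} − z^{−l−1} | ≤ c τ^{l+1}. -/
/-!
Put `w = z τ`. The left-hand side is `τ ^ (l + 1)` times `γ_l(e^{-w}) / l! - w ^ (-l - 1)`, and `w`
lies in the truncated sector `|arg w| < 2π/3`, `|Im w| ≤ π`, so it suffices to bound this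
remainder there. Near `0`, `γ₀(e^{-w}) = 1 / (e^w - 1) = w⁻¹ - 1/2 + w/12 + O(w²)`, and `γ₁`, `γ₂`
are polynomials in `γ₀`, so the pole of order `l + 1` cancels. For `1/2 ≤ |w| ≤ 4` the remainder
is continuous on a compact set, since in the strip `e^{-w} = 1` only at `w = 0`. For `|w| ≥ 4`
the sector and the strip together force `Re w ≥ 1`, where `|e^{-w}| ≤ e^{-1}` keeps `γ_l`
bounded.
-/

open MeasureTheory Real Set

noncomputable section

/-- The open sector `Σ_φ = {z ∈ ℂ \ {0} : |arg z| < φ}`. -/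
def InSector (φ : ℝ) (z : ℂ) : Prop := z ≠ 0 ∧ |Complex.arg z| < φ

/-- Rational closed form of `γ_l(ξ) = Σ_{n≥1} n^l ξ^n` for `l = 0, 1, 2`. -/
def gammaL (l : ℕ) (ξ : ℂ) : ℂ :=
  if l = 0 then ξ / (1 - ξ)
  else if l = 1 then ξ / (1 - ξ)^2
  else (ξ + ξ^2) / (1 - ξ)^3

lemma gammaL_one (ξ : ℂ) : gammaL 1 ξ = gammaL 0 ξ * (1 + gammaL 0 ξ) := by
  rcases eq_or_ne ξ 1 with rfl | hξ
  · simp [gammaL]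
  · have : 1 - ξ ≠ 0 := sub_ne_zero.mpr hξ.symm
    simp only [gammaL, one_ne_zero, if_true, if_false]; field_simp; ring

lemma gammaL_two (ξ : ℂ) :
    gammaL 2 ξ = gammaL 0 ξ * (1 + gammaL 0 ξ) * (1 + 2 * gammaL 0 ξ) := by
  rcases eq_or_ne ξ 1 with rfl | hξ
  · simp [gammaL]
  · have : 1 - ξ ≠ 0 := sub_ne_zero.mpr hξ.symm
    simp only [gammaL, OfNat.ofNat_ne_zero, OfNat.ofNat_ne_one, if_true, if_false]; field_simp; ring

lemma continuousOn_gammaL (l : ℕ) : ContinuousOn (gammaL l) {1}ᶜ := by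
  intro ξ hξ
  have : 1 - ξ ≠ 0 := sub_ne_zero.mpr (Ne.symm hξ)
  unfold gammaL
  split_ifs <;> fun_prop (disch := simpa)

def gammaRemainder (l : ℕ) (w : ℂ) : ℂ :=
  gammaL l (Complex.exp (-w)) / l.factorial - w ^ (-(l : ℤ) - 1)

lemma continuousAt_gammaRemainder (l : ℕ) {w : ℂ} (hw0 : w ≠ 0)
    (hw : Complex.exp (-w) ≠ 1) :
    ContinuousAt (gammaRemainder l) w := by
  have hγ : ContinuousAt (gammaL l ∘ fun w => Complex.exp (-w)) w :=
    ContinuousAt.comp (f := fun w => Complex.exp (-w)) (x := w)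
      ((continuousOn_gammaL l).continuousAt (isOpen_compl_singleton.mem_nhds hw)) (by fun_prop)
  exact (hγ.div_const _).sub (continuousAt_zpow₀ _ _ (.inl hw0))

lemma norm_exp_neg_sub_cubic_le {w : ℂ} (hw : ‖w‖ ≤ 1) :
    ‖Complex.exp (-w) - (1 - w + w ^ 2 / 2 - w ^ 3 / 6)‖ ≤ ‖w‖ ^ 4 / 16 := by
  have h := Complex.exp_bound (x := -w) (by rwa [norm_neg]) (n := 4) (by norm_num)
  norm_num [Finset.sum_range_succ, Nat.factorial] at h
  rw [show (1 : ℂ) + -w + w ^ 2 / 2 + (-w) ^ 3 / 6 = 1 - w + w ^ 2 / 2 - w ^ 3 / 6 by ring] at h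
  linarith [pow_nonneg (norm_nonneg w) 4]

lemma norm_gammaL_zero_exp_neg_sub_le {w : ℂ} (hw0 : w ≠ 0) (hw : ‖w‖ ≤ 1 / 2) :
    ‖gammaL 0 (Complex.exp (-w)) - (w⁻¹ - 1 / 2 + w / 12)‖ ≤ ‖w‖ ^ 2 := by
  set ξ := Complex.exp (-w)
  set E := ξ - (1 - w + w ^ 2 / 2 - w ^ 3 / 6) with hE_def
  have hE : ‖E‖ ≤ ‖w‖ ^ 4 / 16 := norm_exp_neg_sub_cubic_le (by linarith)
  have hw_pos : 0 < ‖w‖ := norm_pos_iff.mpr hw0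
  have hu : ‖w‖ / 2 ≤ ‖1 - ξ‖ := by
    have h1 : 1 - ξ = w - (w ^ 2 / 2 - w ^ 3 / 6 + E) := by rw [hE_def]; ring
    have h2 : ‖w ^ 2 / 2 - w ^ 3 / 6 + E‖
        ≤ ‖w‖ ^ 2 / 2 + ‖w‖ ^ 3 / 6 + ‖w‖ ^ 4 / 16 := by
      refine (norm_add_le _ _).trans (add_le_add ((norm_sub_le _ _).trans ?_) hE)
      simp [norm_pow]
    rw [h1]
    nlinarith [norm_sub_norm_le w (w ^ 2 / 2 - w ^ 3 / 6 + E), pow_pos hw_pos 2, pow_pos hw_pos 3]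
  have hu0 : 1 - ξ ≠ 0 := norm_pos_iff.mp (by linarith)
  -- With `ξ = 1 - w + w ^ 2 / 2 - w ^ 3 / 6 + E`, the terms of order `< 4` cancel in the numerator.
  have key : gammaL 0 ξ - (w⁻¹ - 1 / 2 + w / 12)
      = (-(w ^ 4 / 2) - w ^ 5 / 6 + E * (12 + 6 * w + w ^ 2)) / (12 * w * (1 - ξ)) := by
    simp only [gammaL, if_true, hE_def]
    field_simp
    ring
  have hnum : ‖-(w ^ 4 / 2) - w ^ 5 / 6 + E * (12 + 6 * w + w ^ 2)‖ ≤ 2 * ‖w‖ ^ 4 := by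
    have h12 : ‖(12 : ℂ) + 6 * w + w ^ 2‖ ≤ 12 + 6 * ‖w‖ + ‖w‖ ^ 2 := by
      refine (norm_add_le _ _).trans (add_le_add ((norm_add_le _ _).trans ?_) ?_) <;>
        simp [norm_pow]
    calc _ ≤ ‖w‖ ^ 4 / 2 + ‖w‖ ^ 5 / 6 + ‖E‖ * ‖(12 : ℂ) + 6 * w + w ^ 2‖ := by
          refine (norm_add_le _ _).trans (add_le_add ((norm_sub_le _ _).trans ?_) ?_)
          · simp [norm_pow]
          · rw [norm_mul]
      _ ≤ ‖w‖ ^ 4 / 2 + ‖w‖ ^ 5 / 6 + ‖w‖ ^ 4 / 16 * (12 + 6 * ‖w‖ + ‖w‖ ^ 2) := by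
          gcongr
      _ ≤ 2 * ‖w‖ ^ 4 := by nlinarith [pow_pos hw_pos 4, pow_pos hw_pos 5, pow_pos hw_pos 6]
  have hden : 6 * ‖w‖ ^ 2 ≤ ‖12 * w * (1 - ξ)‖ := by
    rw [norm_mul, norm_mul]; norm_num; nlinarith
  rw [key, norm_div, div_le_iff₀ (by nlinarith)]
  nlinarith [pow_pos hw_pos 4]

-- `γ₁` and `γ₂ / 2` are polynomials in `γ₀`, and the expansion of `γ₀` makes their poles cancel
-- exactly against `w ^ (-l - 1)`.
lemma exists_continuous_gammaRemainder_eq {l : ℕ} (hl : l ≤ 2) :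
    ∃ p : ℂ × ℂ → ℂ, Continuous p ∧ ∀ w b : ℂ, w ≠ 0 →
      gammaL 0 (Complex.exp (-w)) = w⁻¹ - 1 / 2 + w / 12 + w ^ 2 * b →
        gammaRemainder l w = p (w, b) := by
  interval_cases l
  · refine ⟨fun q => -1 / 2 + q.1 / 12 + q.1 ^ 2 * q.2, by fun_prop, fun w b _ h => ?_⟩
    simp only [gammaRemainder, h]
    norm_num; ring
  · refine ⟨fun q => -1 / 12 + 2 * q.1 * q.2 + (q.1 / 12 + q.1 ^ 2 * q.2) ^ 2, by fun_prop,
      fun w b hw h => ?_⟩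
    simp only [gammaRemainder, gammaL_one, h]
    norm_num; field_simp; ring
  · refine ⟨fun q => 3 * q.2 + 3 * q.1 * (1 / 12 + q.1 * q.2) ^ 2
      + q.1 ^ 3 * (1 / 12 + q.1 * q.2) ^ 3 - q.1 * (1 / 12 + q.1 * q.2) / 4, by fun_prop,
      fun w b hw h => ?_⟩
    simp only [gammaRemainder, gammaL_two, h]
    norm_num; field_simp; ring

lemma exists_bound_gammaRemainder_of_norm_le {l : ℕ} (hl : l ≤ 2) : ∃ C, ∀ w : ℂ,
    w ≠ 0 → ‖w‖ ≤ 1 / 2 → ‖gammaRemainder l w‖ ≤ C := by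
  obtain ⟨p, hp, hpw⟩ := exists_continuous_gammaRemainder_eq hl
  obtain ⟨C, hC⟩ := ((isCompact_closedBall (0 : ℂ) (1 / 2)).prod
    (isCompact_closedBall (0 : ℂ) 1)).exists_bound_of_continuousOn hp.continuousOn
  refine ⟨C, fun w hw0 hw => ?_⟩
  set b := (gammaL 0 (Complex.exp (-w)) - (w⁻¹ - 1 / 2 + w / 12)) / w ^ 2
  have hb : ‖b‖ ≤ 1 := by
    rw [norm_div, norm_pow, div_le_one (by positivity)]
    exact norm_gammaL_zero_exp_neg_sub_le hw0 hw
  rw [hpw w b hw0 (by simp only [b]; field_simp; ring)]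
  exact hC (w, b) ⟨by simpa using hw, by simpa using hb⟩

lemma exp_ne_one_of_abs_im_lt {w : ℂ} (hw0 : w ≠ 0) (him : |w.im| < 2 * π) :
    Complex.exp w ≠ 1 := by
  rw [Ne, Complex.exp_eq_one_iff]
  rintro ⟨n, rfl⟩
  have hn : n ≠ 0 := by rintro rfl; simp at hw0
  have : (1 : ℝ) ≤ |(n : ℝ)| := by exact_mod_cast Int.one_le_abs hn
  simp [abs_mul, abs_of_pos pi_pos] at him
  nlinarith [pi_pos]

lemma exists_bound_gammaRemainder_of_mem_annulus (l : ℕ) : ∃ C, ∀ w : ℂ,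
    1 / 2 ≤ ‖w‖ → ‖w‖ ≤ 4 → |w.im| ≤ π → ‖gammaRemainder l w‖ ≤ C := by
  let K := {w : ℂ | 1 / 2 ≤ ‖w‖ ∧ ‖w‖ ≤ 4 ∧ |w.im| ≤ π}
  have hK : IsCompact K := by
    refine (isCompact_closedBall (0 : ℂ) 4).of_isClosed_subset ?_
      fun w hw => by simpa using hw.2.1
    exact (isClosed_le continuous_const continuous_norm).inter
      ((isClosed_le continuous_norm continuous_const).inter
        (isClosed_le (continuous_abs.comp Complex.continuous_im) continuous_const))
  have hcont : ContinuousOn (gammaRemainder l) K := fun w ⟨hw, _, him⟩ => by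
    have hw0 : w ≠ 0 := norm_pos_iff.mp (by linarith)
    have him' : |(-w).im| < 2 * π := by rw [Complex.neg_im, abs_neg]; linarith [pi_pos]
    exact (continuousAt_gammaRemainder l hw0
      (exp_ne_one_of_abs_im_lt (neg_ne_zero.mpr hw0) him')).continuousWithinAt
  obtain ⟨C, hC⟩ := hK.exists_bound_of_continuousOn hcont
  exact ⟨C, fun w h₁ h₂ h₃ => hC w ⟨h₁, h₂, h₃⟩⟩

lemma exists_bound_gammaRemainder_of_one_le_re (l : ℕ) : ∃ C, ∀ w : ℂ,
    1 ≤ w.re → ‖gammaRemainder l w‖ ≤ C := by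
  have hball : Metric.closedBall (0 : ℂ) (Real.exp (-1)) ⊆ {1}ᶜ := fun ξ hξ h1 => by
    rw [h1, mem_closedBall_zero_iff, norm_one] at hξ
    linarith [exp_neg_one_lt_half]
  obtain ⟨C, hC⟩ := (isCompact_closedBall _ _).exists_bound_of_continuousOn
    ((continuousOn_gammaL l).mono hball)
  refine ⟨C + 1, fun w hw => (norm_sub_le _ _).trans (add_le_add ?_ ?_)⟩
  · rw [norm_div, Complex.norm_natCast]
    refine (div_le_self (norm_nonneg _) (by exact_mod_cast l.factorial_pos)).trans (hC _ ?_)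
    rw [mem_closedBall_zero_iff, Complex.norm_exp, Complex.neg_re]
    exact Real.exp_le_exp.mpr (by linarith)
  · rw [norm_zpow]
    exact zpow_le_one_of_nonpos₀ (hw.trans (Complex.re_le_norm w)) (by omega)

lemma neg_half_norm_lt_re {w : ℂ} (hw0 : w ≠ 0) (harg : |Complex.arg w| < 2 * π / 3) :
    -(‖w‖ / 2) < w.re := by
  have hcos : -(1 / 2) < Real.cos (Complex.arg w) := by
    rw [← Real.cos_abs]
    calc -(1 / 2) = Real.cos (2 * π / 3) := by
          rw [show 2 * π / 3 = π - π / 3 by ring, Real.cos_pi_sub, Real.cos_pi_div_three]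
      _ < Real.cos |Complex.arg w| :=
          Real.cos_lt_cos_of_nonneg_of_le_pi (abs_nonneg _) (by linarith [pi_pos]) harg
  rw [← Complex.norm_mul_cos_arg]
  nlinarith [norm_pos_iff.mpr hw0]

lemma one_le_re_of_abs_arg_lt {w : ℂ} (hw0 : w ≠ 0) (harg : |Complex.arg w| < 2 * π / 3)
    (him : |w.im| ≤ π) (hw : 4 ≤ ‖w‖) : 1 ≤ w.re := by
  by_contra! hre
  have hre' := neg_half_norm_lt_re hw0 harg
  have hsq : ‖w‖ ^ 2 = w.re ^ 2 + w.im ^ 2 := by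
    rw [Complex.sq_norm, Complex.normSq_apply]; ring
  have him2 : w.im ^ 2 ≤ π ^ 2 := by rw [← sq_abs]; gcongr
  have hre2 : w.re ^ 2 < ‖w‖ ^ 2 / 4 := by nlinarith
  nlinarith [pi_lt_d2, pi_pos]

lemma exists_bound_gammaRemainder {l : ℕ} (hl : l ≤ 2) : ∃ C, ∀ w : ℂ, w ≠ 0 →
    |Complex.arg w| < 2 * π / 3 → |w.im| ≤ π → ‖gammaRemainder l w‖ ≤ C := by
  obtain ⟨C₁, hC₁⟩ := exists_bound_gammaRemainder_of_norm_le hl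
  obtain ⟨C₂, hC₂⟩ := exists_bound_gammaRemainder_of_mem_annulus l
  obtain ⟨C₃, hC₃⟩ := exists_bound_gammaRemainder_of_one_le_re l
  refine ⟨max C₁ (max C₂ C₃), fun w hw0 harg him => ?_⟩
  rcases le_or_gt ‖w‖ (1 / 2) with hw | hw
  · exact (hC₁ w hw0 hw).trans (le_max_left _ _)
  rcases le_or_gt ‖w‖ 4 with hw' | hw'
  · exact (hC₂ w hw.le hw' him).trans ((le_max_left _ _).trans (le_max_right _ _))
  · exact (hC₃ w (one_le_re_of_abs_arg_lt hw0 harg him hw'.le)).trans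
      ((le_max_right _ _).trans (le_max_right _ _))

lemma gammaL_exp_mul_sub_zpow (l : ℕ) {τ : ℝ} (hτ : 0 < τ) (z : ℂ) :
    gammaL l (Complex.exp (-z * τ)) / l.factorial * (τ : ℂ) ^ (l + 1) - z ^ (-(l : ℤ) - 1)
      = gammaRemainder l (z * τ) * (τ : ℂ) ^ (l + 1) := by
  have hτ0 : (τ : ℂ) ≠ 0 := by exact_mod_cast hτ.ne'
  rw [gammaRemainder, sub_mul, neg_mul, mul_zpow, mul_assoc, ← zpow_natCast, ← zpow_add₀ hτ0]
  norm_num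

theorem stmt_1 (l : ℕ) (hl : l ≤ 2) :
    ∃ θ₀ ∈ Set.Ioo (π/2) π, ∀ θ ∈ Set.Ioo (π/2) θ₀,
      ∃ c > (0:ℝ), ∀ τ > (0:ℝ), ∀ z : ℂ, InSector θ z → |z.im| ≤ π/τ →
        ‖(gammaL l (Complex.exp (-z*τ)) / (l.factorial : ℂ)) * (τ:ℂ)^(l+1)
            - z ^ (-(l:ℤ) - 1)‖ ≤ c * τ^(l+1) := by
  obtain ⟨C, hC⟩ := exists_bound_gammaRemainder hl
  refine ⟨2 * π / 3, ⟨by linarith [pi_pos], by linarith [pi_pos]⟩, fun θ hθ => ?_⟩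
  refine ⟨max C 1, by positivity, fun τ hτ z ⟨hz0, harg⟩ him => ?_⟩
  rw [gammaL_exp_mul_sub_zpow l hτ, norm_mul, norm_pow, Complex.norm_real,
    Real.norm_of_nonneg hτ.le]
  gcongr
  refine (hC _ (mul_ne_zero hz0 (by exact_mod_cast hτ.ne')) ?_ ?_).trans (le_max_left _ _)
  · rw [Complex.arg_mul_real hτ]
    exact harg.trans hθ.2
  · rw [Complex.im_mul_ofReal, abs_mul, abs_of_pos hτ]
    exact (le_div_iff₀ hτ).mp him

end
end

section
/- Let l ∈ {0,1,2}. There exists θ₀ ∈ (π/2, π) such that for every θ ∈ (π/2, θ₀) there is a constant c > 0 with the following property: for every τ > 0 and every z ∈ Σ_θ with |Im z| ≤ π/τ, | δ_τ(e^{−zτ}) · (γ_l(e^{−zτ})/l!) · τ^{l+1} − z^{−l} | ≤ c τ^{l+1} |z| + c τ² |z|^{2−l}. -/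
open MeasureTheory Real Set

noncomputable section

/-- The BDF2 generating function `δ_τ(ξ) = (3/2 - 2ξ + ξ²/2)/τ`. -/
def bdf2 (τ : ℝ) (ξ : ℂ) : ℂ := (3/2 - 2*ξ + ξ^2/2) / (τ : ℂ)

lemma exp_taylor2 (w : ℂ) (h : ‖w‖ ≤ 1) : ‖Complex.exp w - (1 + w)‖ ≤ (3/4)*‖w‖^2 := by
  have := Complex.exp_bound (x := w) (by simpa using h) (n := 2) (by norm_num)
  have h2 : (∑ m ∈ Finset.range 2, w ^ m / m.factorial) = 1 + w := by
    simp [Finset.sum_range_succ]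
  rw [h2] at this
  calc ‖Complex.exp w - (1+w)‖ ≤ ‖w‖ ^ 2 * ((3:ℝ) * ((2:ℝ) * 2)⁻¹) := by
        simpa using this
    _ = (3/4)*‖w‖^2 := by ring

lemma exp_taylor3 (w : ℂ) (h : ‖w‖ ≤ 1) : ‖Complex.exp w - (1 + w + w^2/2)‖ ≤ (2/9)*‖w‖^3 := by
  have := Complex.exp_bound (x := w) (by simpa using h) (n := 3) (by norm_num)
  have h2 : (∑ m ∈ Finset.range 3, w ^ m / m.factorial) = 1 + w + w^2/2 := by
    simp [Finset.sum_range_succ]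
  rw [h2] at this
  calc ‖Complex.exp w - (1+w+w^2/2)‖ ≤ ‖w‖ ^ 3 * ((4:ℝ) * ((6:ℝ) * 3)⁻¹) := by
        simpa [Nat.factorial] using this
    _ = (2/9)*‖w‖^3 := by ring

lemma exp_taylor4 (w : ℂ) (h : ‖w‖ ≤ 1) : ‖Complex.exp w - (1 + w + w^2/2 + w^3/6)‖ ≤ (5/96)*‖w‖^4 := by
  have := Complex.exp_bound (x := w) (by simpa using h) (n := 4) (by norm_num)
  have h2 : (∑ m ∈ Finset.range 4, w ^ m / m.factorial) = 1 + w + w^2/2 + w^3/6 := by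
    simp [Finset.sum_range_succ, Nat.factorial]
  rw [h2] at this
  calc ‖Complex.exp w - (1+w+w^2/2+w^3/6)‖ ≤ ‖w‖ ^ 4 * ((5:ℝ) * ((24:ℝ) * 4)⁻¹) := by
        simpa [Nat.factorial] using this
    _ = (5/96)*‖w‖^4 := by ring

lemma one_sub_cos (y : ℝ) : 1 - Real.cos y = 2 * Real.sin (y/2) ^ 2 := by
  have h := Real.cos_two_mul' (y/2)
  have h2 := Real.sin_sq_add_cos_sq (y/2)
  have h3 : (2:ℝ) * (y/2) = y := by ring
  rw [h3] at h
  nlinarith [h, h2]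

lemma normsq_one_sub_exp (w : ℂ) :
    ‖1 - Complex.exp (-w)‖^2
      = (1 - Real.exp (-w.re))^2 + 2 * Real.exp (-w.re) * (1 - Real.cos w.im) := by
  rw [Complex.sq_norm, Complex.normSq_apply]
  have hre : (1 - Complex.exp (-w)).re = 1 - Real.exp (-w.re) * Real.cos w.im := by
    simp [Complex.exp_re]
  have him : (1 - Complex.exp (-w)).im = Real.exp (-w.re) * Real.sin w.im := by
    simp [Complex.exp_im]
  rw [hre, him]
  have hs := Real.sin_sq_add_cos_sq w.im
  linear_combination (Real.exp (-w.re))^2 * hs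

lemma denom_lb_far (w : ℂ) (him : |w.im| ≤ π) (h : 1/3 ≤ ‖w‖) :
    1/10 ≤ ‖1 - Complex.exp (-w)‖ := by
  have key := normsq_one_sub_exp w
  have hnn : (0:ℝ) ≤ ‖1 - Complex.exp (-w)‖ := norm_nonneg _
  have hpos : (0:ℝ) < Real.exp (-w.re) := Real.exp_pos _
  have hcos : 1 - Real.cos w.im ≥ 0 := by nlinarith [Real.cos_le_one w.im]
  have hb : 1/100 ≤ ‖1 - Complex.exp (-w)‖^2 := by
    rcases le_or_gt (1/4 : ℝ) |w.re| with hx | hx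
    · have h1 : (1 - Real.exp (-w.re))^2 ≥ 1/100 := by
        rcases le_or_gt 0 w.re with hx0 | hx0
        · have hxq : (1/4:ℝ) ≤ w.re := by rwa [abs_of_nonneg hx0] at hx
          have h5 : (5/4:ℝ) ≤ Real.exp (1/4:ℝ) := by nlinarith [Real.add_one_le_exp (1/4:ℝ)]
          have hmul : Real.exp (-(1/4:ℝ)) * Real.exp (1/4:ℝ) = 1 := by
            rw [← Real.exp_add]; norm_num
          have h6 : Real.exp (-(1/4:ℝ)) ≤ 4/5 := by
            nlinarith [Real.exp_pos (-(1/4:ℝ))]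
          have h7 : Real.exp (-w.re) ≤ Real.exp (-(1/4:ℝ)) := Real.exp_le_exp.2 (by linarith)
          nlinarith
        · have hxq : (1/4:ℝ) ≤ -w.re := by rw [abs_of_neg hx0] at hx; linarith
          have : (5/4:ℝ) ≤ Real.exp (-w.re) := by nlinarith [Real.add_one_le_exp (-w.re)]
          nlinarith
      nlinarith [mul_nonneg hpos.le hcos]
    · have hy2 : (7/144 : ℝ) ≤ w.im^2 := by
        have habs : ‖w‖^2 = w.re^2 + w.im^2 := by
          rw [Complex.sq_norm, Complex.normSq_apply]; ring
        have hx2 : w.re^2 < 1/16 := by nlinarith [abs_nonneg w.re, sq_abs w.re]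
        nlinarith [h, norm_nonneg w]
      have hexp : (3/4:ℝ) ≤ Real.exp (-w.re) := by
        have hh := (abs_le.1 hx.le).2
        nlinarith [Real.add_one_le_exp (-w.re)]
      have hsin : 2/π * (|w.im|/2) ≤ Real.sin (|w.im|/2) := by
        apply Real.mul_le_sin (by positivity)
        linarith [abs_nonneg w.im]
      have hge : 0 ≤ Real.sin (|w.im|/2) :=
        Real.sin_nonneg_of_nonneg_of_le_pi (by positivity) (by linarith [Real.pi_pos, abs_nonneg w.im])
      have hsq : Real.sin (w.im/2) ^ 2 = Real.sin (|w.im|/2) ^ 2 := by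
        rcases abs_cases w.im with ⟨h1, _⟩ | ⟨h1, _⟩
        · rw [h1]
        · rw [h1, show -w.im/2 = -(w.im/2) from by ring, Real.sin_neg]; ring
      have hcos2 := one_sub_cos w.im
      have hpip : (0:ℝ) < π := Real.pi_pos
      have hpi2 : π^2 ≤ 10 := by nlinarith [Real.pi_lt_d2]
      -- π² sin(|y|/2)² ≥ y²
      have hkey : π^2 * Real.sin (w.im/2)^2 ≥ w.im^2 := by
        rw [hsq]
        have h2 : 2/π * (|w.im|/2) = |w.im|/π := by field_simp
        rw [h2] at hsin
        have : (|w.im|/π)^2 ≤ Real.sin (|w.im|/2)^2 := by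
          apply sq_le_sq' _ hsin
          nlinarith [abs_nonneg w.im, div_nonneg (abs_nonneg w.im) hpip.le]
        have h3 : (|w.im|/π)^2 = w.im^2/π^2 := by rw [div_pow, sq_abs]
        rw [h3] at this
        have := mul_le_mul_of_nonneg_left this (by positivity : (0:ℝ) ≤ π^2)
        calc w.im^2 = π^2 * (w.im^2/π^2) := by field_simp
          _ ≤ π^2 * Real.sin (|w.im|/2)^2 := this
      have hsin2 : (7/1440:ℝ) ≤ Real.sin (w.im/2)^2 := by
        have hp := mul_nonneg (sub_nonneg.2 hpi2) (sq_nonneg (Real.sin (w.im/2)))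
        linarith [hp, hkey, hy2]
      have hprod : (3/4:ℝ)*(7/1440) ≤ Real.exp (-w.re) * Real.sin (w.im/2)^2 :=
        mul_le_mul hexp hsin2 (by norm_num) hpos.le
      rw [key, hcos2]
      linarith [sq_nonneg (1 - Real.exp (-w.re)), hprod]
  nlinarith [hb, hnn]

lemma denom_lb_near (w : ℂ) (h : ‖w‖ ≤ 1/3) : (3/4)*‖w‖ ≤ ‖1 - Complex.exp (-w)‖ := by
  have ht := exp_taylor2 (-w) (by rw [norm_neg]; linarith)
  rw [norm_neg] at ht
  have hid : 1 - Complex.exp (-w) = w - (Complex.exp (-w) - (1 + (-w))) := by ring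
  rw [hid]
  have h2 := norm_sub_norm_le w (Complex.exp (-w) - (1 + (-w)))
  nlinarith [norm_nonneg w]

lemma exp_norm_le (w : ℂ) (hre : -π ≤ w.re) : ‖Complex.exp (-w)‖ ≤ 55 := by
  rw [Complex.norm_exp]
  have h1 : (-w).re ≤ 4 := by
    simp only [Complex.neg_re]
    linarith [Real.pi_le_four]
  calc Real.exp (-w).re ≤ Real.exp 4 := Real.exp_le_exp.2 h1
    _ = Real.exp 1 ^ (4:ℕ) := by rw [← Real.exp_nat_mul]; norm_num
    _ ≤ 2.7182818286^4 := by
        have := Real.exp_one_lt_d9.le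
        gcongr
    _ ≤ 55 := by norm_num

lemma quot_le {N D : ℂ} {a b : ℝ} (hN : ‖N‖ ≤ a) (hb : 0 < b) (hD : b ≤ ‖D‖) :
    ‖N/D‖ ≤ a/b := by
  rw [norm_div]
  exact div_le_div₀ (le_trans (norm_nonneg _) hN) hN hb hD

lemma master1 (w : ℂ) (hw : w ≠ 0) (him : |w.im| ≤ π) (hre : -π ≤ w.re) :
    ‖Complex.exp (-w)*(3-Complex.exp (-w))/(2*(1-Complex.exp (-w))) - w⁻¹‖ ≤ 10^7 * ‖w‖ := by
  set E := Complex.exp (-w) with hE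
  have hwn : 0 < ‖w‖ := norm_pos_iff.2 hw
  rcases le_or_gt ‖w‖ (1/3) with hnear | hfar
  · -- near region
    have hlb := denom_lb_near w hnear
    have hDne : (1:ℂ) - E ≠ 0 := by
      intro hc
      rw [hc, norm_zero] at hlb
      nlinarith
    set r₁ := E - (1 - w + w^2/2) with hr₁
    set r₂ := E^2 - (1 - 2*w + 2*w^2) with hr₂
    have hb₁ : ‖r₁‖ ≤ (2/9)*‖w‖^3 := by
      have := exp_taylor3 (-w) (by rw [norm_neg]; linarith)
      rw [norm_neg] at this
      have he : Complex.exp (-w) - (1 + (-w) + (-w)^2/2) = r₁ := by rw [hr₁]; ring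
      rwa [he] at this
    have hb₂ : ‖r₂‖ ≤ (16/9)*‖w‖^3 := by
      have hE2 : E^2 = Complex.exp (-(2*w)) := by
        rw [sq, ← Complex.exp_add]
        congr 1
        ring
      have := exp_taylor3 (-(2*w)) (by rw [norm_neg, norm_mul, RCLike.norm_ofNat]; linarith)
      rw [norm_neg, norm_mul] at this
      have he : Complex.exp (-(2*w)) - (1 + (-(2*w)) + (-(2*w))^2/2) = r₂ := by
        rw [hr₂, hE2]; ring
      rw [he] at this
      calc ‖r₂‖ ≤ (2/9)*(‖(2:ℂ)‖*‖w‖)^3 := this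
        _ = (16/9)*‖w‖^3 := by simp; ring
    have hid : E*(3-E)/(2*(1-E)) - w⁻¹
        = (-w^3/2 + 3*w*r₁ - w*r₂ + 2*r₁) / (2*w*(1-E)) := by
      rw [hr₁, hr₂]
      field_simp
      ring
    rw [hid]
    have e1 : ‖(3:ℂ)*w*r₁‖ ≤ 3*‖w‖*((2/9)*‖w‖^3) := by
      rw [norm_mul, norm_mul, RCLike.norm_ofNat]
      exact mul_le_mul_of_nonneg_left hb₁ (by positivity)
    have e2 : ‖w*r₂‖ ≤ ‖w‖*((16/9)*‖w‖^3) := by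
      rw [norm_mul]
      exact mul_le_mul_of_nonneg_left hb₂ (norm_nonneg w)
    have e3 : ‖(2:ℂ)*r₁‖ ≤ 2*((2/9)*‖w‖^3) := by
      rw [norm_mul, RCLike.norm_ofNat]
      exact mul_le_mul_of_nonneg_left hb₁ (by norm_num)
    have t1 : ‖-w^3/2‖ = ‖w‖^3/2 := by
      rw [show (-w^3/2 : ℂ) = -(w^3/2) by ring, norm_neg, norm_div, norm_pow,
        RCLike.norm_ofNat]
    have hNb : ‖-w^3/2 + 3*w*r₁ - w*r₂ + 2*r₁‖ ≤ 2*‖w‖^3 := by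
      have c1 : ‖-w^3/2 + 3*w*r₁ - w*r₂ + 2*r₁‖
          ≤ ‖-w^3/2‖ + ‖(3:ℂ)*w*r₁‖ + ‖w*r₂‖ + ‖(2:ℂ)*r₁‖ := by
        calc ‖-w^3/2 + 3*w*r₁ - w*r₂ + 2*r₁‖
            ≤ ‖-w^3/2 + 3*w*r₁ - w*r₂‖ + ‖(2:ℂ)*r₁‖ := norm_add_le _ _
          _ ≤ ‖-w^3/2 + 3*w*r₁‖ + ‖w*r₂‖ + ‖(2:ℂ)*r₁‖ := by
              gcongr ?_ + _; exact norm_sub_le _ _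
          _ ≤ ‖-w^3/2‖ + ‖(3:ℂ)*w*r₁‖ + ‖w*r₂‖ + ‖(2:ℂ)*r₁‖ := by
              gcongr ?_ + _ + _; exact norm_add_le _ _
      rw [t1] at c1
      have hx4 := mul_le_mul_of_nonneg_right hnear (le_of_lt (pow_pos hwn 3))
      nlinarith [e1, e2, e3, c1, pow_pos hwn 3]
    have hDb : (3/2)*‖w‖^2 ≤ ‖2*w*(1-E)‖ := by
      rw [norm_mul, norm_mul, RCLike.norm_ofNat]
      nlinarith [norm_nonneg (1-E)]
    calc ‖(-w^3/2 + 3*w*r₁ - w*r₂ + 2*r₁) / (2*w*(1-E))‖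
        ≤ (2*‖w‖^3)/((3/2)*‖w‖^2) := quot_le hNb (by positivity) hDb
      _ ≤ 10^7*‖w‖ := by
          rw [div_le_iff₀ (by positivity)]
          nlinarith [pow_pos hwn 3]
  · -- far region
    have hlb := denom_lb_far w him hfar.le
    have hEb := exp_norm_le w hre
    have h1 : ‖E*(3-E)/(2*(1-E))‖ ≤ (55*58)/(2*(1/10)) := by
      apply quot_le _ (by norm_num)
      · rw [norm_mul, RCLike.norm_ofNat]
        nlinarith [norm_nonneg (1-E)]
      · rw [norm_mul]
        have : ‖(3:ℂ)-E‖ ≤ 58 := by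
          calc ‖(3:ℂ)-E‖ ≤ ‖(3:ℂ)‖ + ‖E‖ := norm_sub_le _ _
            _ ≤ 58 := by rw [RCLike.norm_ofNat]; linarith
        nlinarith [norm_nonneg E, norm_nonneg ((3:ℂ)-E)]
    have h2 : ‖w⁻¹‖ ≤ 3 := by
      rw [norm_inv]
      rw [inv_le_comm₀ (by positivity) (by norm_num)]
      linarith
    calc ‖E*(3-E)/(2*(1-E)) - w⁻¹‖ ≤ ‖E*(3-E)/(2*(1-E))‖ + ‖w⁻¹‖ := norm_sub_le _ _
      _ ≤ (55*58)/(2*(1/10)) + 3 := by linarith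
      _ ≤ 10^7 * (1/3) := by norm_num
      _ ≤ 10^7 * ‖w‖ := by nlinarith

lemma master0 (w : ℂ) (hw : w ≠ 0) (him : |w.im| ≤ π) (hre : -π ≤ w.re) :
    ‖Complex.exp (-w)*(3-Complex.exp (-w))/2 - 1‖ ≤ 10^7 * ‖w‖ := by
  set E := Complex.exp (-w) with hE
  have hwn : 0 < ‖w‖ := norm_pos_iff.2 hw
  have hEb := exp_norm_le w hre
  have hE2 : ‖E - 2‖ ≤ 57 := by
    calc ‖E - 2‖ ≤ ‖E‖ + ‖(2:ℂ)‖ := norm_sub_le _ _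
      _ ≤ 57 := by rw [RCLike.norm_ofNat]; linarith
  rcases le_or_gt ‖w‖ (1/3) with hnear | hfar
  · have ht := exp_taylor2 (-w) (by rw [norm_neg]; linarith)
    rw [norm_neg] at ht
    have h1E : ‖1 - E‖ ≤ (5/4)*‖w‖ := by
      have hid : 1 - E = w - (Complex.exp (-w) - (1 + (-w))) := by rw [hE]; ring
      rw [hid]
      calc ‖w - (Complex.exp (-w) - (1 + (-w)))‖
          ≤ ‖w‖ + ‖Complex.exp (-w) - (1 + (-w))‖ := norm_sub_le _ _
        _ ≤ (5/4)*‖w‖ := by nlinarith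
    have hid2 : E*(3-E)/2 - 1 = (1-E)*(E-2)/2 := by ring
    rw [hid2, norm_div, norm_mul, RCLike.norm_ofNat]
    calc ‖1-E‖*‖E-2‖/2 ≤ ((5/4)*‖w‖)*57/2 := by
          gcongr
      _ ≤ 10^7*‖w‖ := by nlinarith
  · have h1 : ‖E*(3-E)/2‖ ≤ 55*58/2 := by
      apply quot_le _ (by norm_num)
      · rw [RCLike.norm_ofNat]
      · rw [norm_mul]
        have h3 : ‖(3:ℂ)-E‖ ≤ 58 := by
          calc ‖(3:ℂ)-E‖ ≤ ‖(3:ℂ)‖ + ‖E‖ := norm_sub_le _ _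
            _ ≤ 58 := by rw [RCLike.norm_ofNat]; linarith
        nlinarith [norm_nonneg E, norm_nonneg ((3:ℂ)-E)]
    calc ‖E*(3-E)/2 - 1‖ ≤ ‖E*(3-E)/2‖ + ‖(1:ℂ)‖ := norm_sub_le _ _
      _ ≤ 55*58/2 + 1 := by rw [norm_one]; linarith
      _ ≤ 10^7 * (1/3) := by norm_num
      _ ≤ 10^7 * ‖w‖ := by nlinarith

set_option maxHeartbeats 1000000 in
lemma master2 (w : ℂ) (hw : w ≠ 0) (him : |w.im| ≤ π) (hre : -π ≤ w.re) :
    ‖Complex.exp (-w)*(3-Complex.exp (-w))*(1+Complex.exp (-w))/(4*(1-Complex.exp (-w))^2)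
      - (w^2)⁻¹‖ ≤ 10^7 := by
  set E := Complex.exp (-w) with hE
  have hwn : 0 < ‖w‖ := norm_pos_iff.2 hw
  rcases le_or_gt ‖w‖ (1/3) with hnear | hfar
  · have hlb := denom_lb_near w hnear
    rw [← hE] at hlb
    have hDne : (1:ℂ) - E ≠ 0 := by
      intro hc
      rw [hc, norm_zero] at hlb
      nlinarith
    set r₁ := E - (1 - w + w^2/2 - w^3/6) with hr₁
    set r₂ := E^2 - (1 - 2*w + 2*w^2 - (4/3)*w^3) with hr₂
    set r₃ := E^3 - (1 - 3*w + (9/2)*w^2 - (9/2)*w^3) with hr₃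
    have hb₁ : ‖r₁‖ ≤ (5/96)*‖w‖^4 := by
      have := exp_taylor4 (-w) (by rw [norm_neg]; linarith)
      rw [norm_neg] at this
      have he : Complex.exp (-w) - (1 + (-w) + (-w)^2/2 + (-w)^3/6) = r₁ := by rw [hr₁]; ring
      rwa [he] at this
    have hb₂ : ‖r₂‖ ≤ (5/6)*‖w‖^4 := by
      have hE2 : E^2 = Complex.exp (-(2*w)) := by
        rw [sq, ← Complex.exp_add]
        congr 1
        ring
      have := exp_taylor4 (-(2*w)) (by rw [norm_neg, norm_mul, RCLike.norm_ofNat]; linarith)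
      rw [norm_neg, norm_mul, RCLike.norm_ofNat] at this
      have he : Complex.exp (-(2*w)) - (1 + (-(2*w)) + (-(2*w))^2/2 + (-(2*w))^3/6) = r₂ := by
        rw [hr₂, hE2]; ring
      rw [he] at this
      calc ‖r₂‖ ≤ (5/96)*(2*‖w‖)^4 := this
        _ = (5/6)*‖w‖^4 := by ring
    have hb₃ : ‖r₃‖ ≤ (405/96)*‖w‖^4 := by
      have hE3 : E^3 = Complex.exp (-(3*w)) := by
        rw [pow_succ, sq, ← Complex.exp_add, ← Complex.exp_add]
        congr 1
        ring
      have := exp_taylor4 (-(3*w)) (by rw [norm_neg, norm_mul, RCLike.norm_ofNat]; linarith)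
      rw [norm_neg, norm_mul, RCLike.norm_ofNat] at this
      have he : Complex.exp (-(3*w)) - (1 + (-(3*w)) + (-(3*w))^2/2 + (-(3*w))^3/6) = r₃ := by
        rw [hr₃, hE3]; ring
      rw [he] at this
      calc ‖r₃‖ ≤ (5/96)*(3*‖w‖)^4 := this
        _ = (405/96)*‖w‖^4 := by ring
    have hid : E*(3-E)*(1+E)/(4*(1-E)^2) - (w^2)⁻¹
        = (w^4 + (4/3)*w^5 + 3*w^2*r₁ + 2*w^2*r₂ - w^2*r₃ + 8*r₁ - 4*r₂) / (4*w^2*(1-E)^2) := by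
      rw [hr₁, hr₂, hr₃]
      field_simp [pow_ne_zero 2 hw, pow_ne_zero 2 hDne]
      ring
    rw [hid]
    set N := w^4 + (4/3)*w^5 + 3*w^2*r₁ + 2*w^2*r₂ - w^2*r₃ + 8*r₁ - 4*r₂ with hN
    have e0 : ‖w^4 + (4/3)*w^5‖ ≤ ‖w‖^4 + (4/3)*‖w‖^5 := by
      calc ‖w^4 + (4/3)*w^5‖ ≤ ‖w^4‖ + ‖(4/3:ℂ)*w^5‖ := norm_add_le _ _
        _ ≤ ‖w‖^4 + (4/3)*‖w‖^5 := by
            rw [norm_pow, norm_mul, norm_pow]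
            gcongr
            rw [norm_div, RCLike.norm_ofNat, RCLike.norm_ofNat]
    have e1 : ‖(3:ℂ)*w^2*r₁‖ ≤ 3*‖w‖^2*((5/96)*‖w‖^4) := by
      rw [norm_mul, norm_mul, RCLike.norm_ofNat, norm_pow]
      exact mul_le_mul_of_nonneg_left hb₁ (by positivity)
    have e2 : ‖(2:ℂ)*w^2*r₂‖ ≤ 2*‖w‖^2*((5/6)*‖w‖^4) := by
      rw [norm_mul, norm_mul, RCLike.norm_ofNat, norm_pow]
      exact mul_le_mul_of_nonneg_left hb₂ (by positivity)
    have e3 : ‖w^2*r₃‖ ≤ ‖w‖^2*((405/96)*‖w‖^4) := by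
      rw [norm_mul, norm_pow]
      exact mul_le_mul_of_nonneg_left hb₃ (by positivity)
    have e4 : ‖(8:ℂ)*r₁‖ ≤ 8*((5/96)*‖w‖^4) := by
      rw [norm_mul, RCLike.norm_ofNat]
      exact mul_le_mul_of_nonneg_left hb₁ (by norm_num)
    have e5 : ‖(4:ℂ)*r₂‖ ≤ 4*((5/6)*‖w‖^4) := by
      rw [norm_mul, RCLike.norm_ofNat]
      exact mul_le_mul_of_nonneg_left hb₂ (by norm_num)
    have hNb : ‖N‖ ≤ 6*‖w‖^4 := by
      have c1 : ‖N‖ ≤ ‖w^4 + (4/3)*w^5‖ + ‖(3:ℂ)*w^2*r₁‖ + ‖(2:ℂ)*w^2*r₂‖ + ‖w^2*r₃‖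
          + ‖(8:ℂ)*r₁‖ + ‖(4:ℂ)*r₂‖ := by
        rw [hN]
        calc ‖w^4 + (4/3)*w^5 + 3*w^2*r₁ + 2*w^2*r₂ - w^2*r₃ + 8*r₁ - 4*r₂‖
            ≤ ‖w^4 + (4/3)*w^5 + 3*w^2*r₁ + 2*w^2*r₂ - w^2*r₃ + 8*r₁‖ + ‖(4:ℂ)*r₂‖ :=
              norm_sub_le _ _
          _ ≤ ‖w^4 + (4/3)*w^5 + 3*w^2*r₁ + 2*w^2*r₂ - w^2*r₃‖ + ‖(8:ℂ)*r₁‖ + ‖(4:ℂ)*r₂‖ := by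
              gcongr ?_ + _; exact norm_add_le _ _
          _ ≤ ‖w^4 + (4/3)*w^5 + 3*w^2*r₁ + 2*w^2*r₂‖ + ‖w^2*r₃‖ + ‖(8:ℂ)*r₁‖ + ‖(4:ℂ)*r₂‖ := by
              gcongr ?_ + _ + _; exact norm_sub_le _ _
          _ ≤ ‖w^4 + (4/3)*w^5 + 3*w^2*r₁‖ + ‖(2:ℂ)*w^2*r₂‖ + ‖w^2*r₃‖ + ‖(8:ℂ)*r₁‖
              + ‖(4:ℂ)*r₂‖ := by
              gcongr ?_ + _ + _ + _; exact norm_add_le _ _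
          _ ≤ ‖w^4 + (4/3)*w^5‖ + ‖(3:ℂ)*w^2*r₁‖ + ‖(2:ℂ)*w^2*r₂‖ + ‖w^2*r₃‖ + ‖(8:ℂ)*r₁‖
              + ‖(4:ℂ)*r₂‖ := by
              gcongr ?_ + _ + _ + _ + _; exact norm_add_le _ _
      have hx5 := mul_le_mul_of_nonneg_right hnear (le_of_lt (pow_pos hwn 4))
      have hx2 : ‖w‖^2 ≤ 1/9 := by nlinarith
      have hx6 := mul_le_mul_of_nonneg_right hx2 (le_of_lt (pow_pos hwn 4))
      linarith [e0, e1, e2, e3, e4, e5, c1, le_of_lt (pow_pos hwn 4)]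
    have hDb : (9/4)*‖w‖^4 ≤ ‖4*w^2*(1-E)^2‖ := by
      rw [norm_mul, norm_mul, RCLike.norm_ofNat, norm_pow, norm_pow]
      have hsq : (3/4*‖w‖)*(3/4*‖w‖) ≤ ‖1-E‖*‖1-E‖ :=
        mul_le_mul hlb hlb (by positivity) (norm_nonneg _)
      have h2 := mul_le_mul_of_nonneg_left hsq (by positivity : (0:ℝ) ≤ 4*‖w‖^2)
      linarith [h2]
    calc ‖N / (4*w^2*(1-E)^2)‖ ≤ (6*‖w‖^4)/((9/4)*‖w‖^4) := quot_le hNb (by positivity) hDb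
      _ ≤ 10^7 := by
          rw [div_le_iff₀ (by positivity)]
          linarith [pow_pos hwn 4]
  · have hlb := denom_lb_far w him hfar.le
    rw [← hE] at hlb
    have hEb := exp_norm_le w hre
    rw [← hE] at hEb
    have h1 : ‖E*(3-E)*(1+E)/(4*(1-E)^2)‖ ≤ (55*58*56)/(4*(1/100)) := by
      apply quot_le _ (by norm_num)
      · rw [norm_mul, RCLike.norm_ofNat, norm_pow]
        have hsq : (1/10:ℝ)*(1/10) ≤ ‖1-E‖*‖1-E‖ :=
          mul_le_mul hlb hlb (by norm_num) (norm_nonneg _)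
        nlinarith [hsq]
      · have h3 : ‖(3:ℂ)-E‖ ≤ 58 := by
          calc ‖(3:ℂ)-E‖ ≤ ‖(3:ℂ)‖ + ‖E‖ := norm_sub_le _ _
            _ ≤ 58 := by rw [RCLike.norm_ofNat]; linarith
        have h4 : ‖(1:ℂ)+E‖ ≤ 56 := by
          calc ‖(1:ℂ)+E‖ ≤ ‖(1:ℂ)‖ + ‖E‖ := norm_add_le _ _
            _ ≤ 56 := by rw [norm_one]; linarith
        rw [norm_mul, norm_mul]
        have h5 : ‖E‖*‖3-E‖ ≤ 55*58 := mul_le_mul hEb h3 (norm_nonneg _) (by norm_num)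
        exact mul_le_mul h5 h4 (norm_nonneg _) (by norm_num)
    have h2 : ‖(w^2)⁻¹‖ ≤ 9 := by
      rw [norm_inv, norm_pow]
      rw [inv_le_comm₀ (by positivity) (by norm_num)]
      nlinarith
    calc ‖E*(3-E)*(1+E)/(4*(1-E)^2) - (w^2)⁻¹‖
        ≤ ‖E*(3-E)*(1+E)/(4*(1-E)^2)‖ + ‖(w^2)⁻¹‖ := norm_sub_le _ _
      _ ≤ (55*58*56)/(4*(1/100)) + 9 := by linarith
      _ ≤ 10^7 := by norm_num

lemma denom_ne (w : ℂ) (hw : w ≠ 0) (him : |w.im| ≤ π) :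
    1 - Complex.exp (-w) ≠ 0 := by
  have hwn : 0 < ‖w‖ := norm_pos_iff.2 hw
  intro hc
  rcases le_or_gt ‖w‖ (1/3) with h | h
  · have := denom_lb_near w h
    rw [hc, norm_zero] at this
    nlinarith
  · have := denom_lb_far w him h.le
    rw [hc, norm_zero] at this
    norm_num at this

lemma sector_re (w : ℂ) (hw : w ≠ 0) (harg : |Complex.arg w| < 3*π/4)
    (him : |w.im| ≤ π) : -π ≤ w.re := by
  have hpi := Real.pi_pos
  rcases le_or_gt 0 w.re with h | h
  · linarith
  · have hwn : 0 < ‖w‖ := norm_pos_iff.2 hw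
    have hcos : Real.cos (Complex.arg w) = w.re / ‖w‖ := by
      exact Complex.cos_arg hw
    have hlt : Real.cos (3*π/4) < Real.cos |Complex.arg w| :=
      Real.cos_lt_cos_of_nonneg_of_le_pi (abs_nonneg _) (by linarith) harg
    rw [Real.cos_abs, hcos] at hlt
    have hval : Real.cos (3*π/4) = -(Real.sqrt 2/2) := by
      rw [show (3*π/4 : ℝ) = π - π/4 by ring, Real.cos_pi_sub, Real.cos_pi_div_four]
    rw [hval] at hlt
    have hre2 : -(Real.sqrt 2/2) * ‖w‖ < w.re := by
      rw [lt_div_iff₀ hwn] at hlt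
      linarith
    have hs2 : Real.sqrt 2 ^ 2 = 2 := Real.sq_sqrt (by norm_num)
    have hsp : 0 ≤ Real.sqrt 2 := Real.sqrt_nonneg 2
    have hn : ‖w‖^2 = w.re^2 + w.im^2 := by
      rw [Complex.sq_norm, Complex.normSq_apply]; ring
    have hq : (-w.re)*(-w.re) < ((Real.sqrt 2/2)*‖w‖)*((Real.sqrt 2/2)*‖w‖) :=
      mul_self_lt_mul_self (by linarith) (by linarith)
    have him2 : w.im^2 ≤ π^2 := by
      nlinarith [sq_abs w.im, abs_nonneg w.im]
    nlinarith [hq, hs2, hn, him2]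


theorem stmt_2 (l : ℕ) (hl : l ≤ 2) :
    ∃ θ₀ ∈ Set.Ioo (π/2) π, ∀ θ ∈ Set.Ioo (π/2) θ₀,
      ∃ c > (0:ℝ), ∀ τ > (0:ℝ), ∀ z : ℂ, InSector θ z → |z.im| ≤ π/τ →
        ‖bdf2 τ (Complex.exp (-z*τ)) * (gammaL l (Complex.exp (-z*τ)) / (l.factorial : ℂ))
              * (τ:ℂ)^(l+1) - z ^ (-(l:ℤ))‖
          ≤ c * τ^(l+1) * ‖z‖ + c * τ^2 * ‖z‖ ^ ((2:ℤ) - (l:ℤ)) := by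
  have hpi := Real.pi_pos
  refine ⟨3*π/4, ⟨by linarith, by linarith⟩, ?_⟩
  intro θ hθ
  refine ⟨10^7, by norm_num, ?_⟩
  intro τ hτ z hz him
  obtain ⟨hz0, harg⟩ := hz
  have hτC : (τ:ℂ) ≠ 0 := by exact_mod_cast hτ.ne'
  set w : ℂ := z * (τ:ℂ) with hwdef
  have hw : w ≠ 0 := mul_ne_zero hz0 hτC
  have hargw : Complex.arg w = Complex.arg z := by
    rw [hwdef, mul_comm]
    exact Complex.arg_real_mul z hτ
  have hwim : w.im = z.im * τ := by
    rw [hwdef]; simp [Complex.mul_im]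
  have him' : |w.im| ≤ π := by
    rw [hwim, abs_mul, abs_of_pos hτ]
    calc |z.im| * τ ≤ (π/τ) * τ := by
          apply mul_le_mul_of_nonneg_right him hτ.le
      _ = π := by field_simp
  have hre' : -π ≤ w.re := by
    apply sector_re w hw _ him'
    rw [hargw]
    calc |Complex.arg z| < θ := harg
      _ < 3*π/4 := hθ.2
  have h1E : 1 - Complex.exp (-w) ≠ 0 := denom_ne w hw him'
  have hnegz : -z*(τ:ℂ) = -w := by rw [hwdef]; ring
  have h1E'' : 1 - Complex.exp (-(z*(τ:ℂ))) ≠ 0 := by rw [← hwdef]; exact h1E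
  have hwnorm : ‖w‖ = τ * ‖z‖ := by
    rw [hwdef, norm_mul, Complex.norm_real, Real.norm_eq_abs, abs_of_pos hτ]; ring
  rw [hnegz]
  interval_cases l
  · -- l = 0
    have key := master0 w hw him' hre'
    have hid : bdf2 τ (Complex.exp (-w)) * (gammaL 0 (Complex.exp (-w)) / ((Nat.factorial 0 : ℕ) : ℂ))
        * (τ:ℂ)^(0+1) - z ^ (-(0:ℕ):ℤ)
        = Complex.exp (-w)*(3-Complex.exp (-w))/2 - 1 := by
      simp only [gammaL, if_pos rfl, ↓reduceIte, Nat.factorial_zero, Nat.cast_one, Nat.cast_zero, neg_zero,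
        zpow_zero, pow_one]
      rw [bdf2, hwdef]
      field_simp [h1E'', hτC]
      ring
    rw [hid]
    have hz2 : ‖z‖ ^ ((2:ℤ) - ((0:ℕ):ℤ)) = ‖z‖^2 := by
      rw [show ((2:ℤ) - ((0:ℕ):ℤ)) = ((2:ℕ):ℤ) by norm_num, zpow_natCast]
    rw [hz2]
    calc ‖Complex.exp (-w)*(3-Complex.exp (-w))/2 - 1‖ ≤ 10^7 * ‖w‖ := key
      _ = 10^7 * τ^(0+1) * ‖z‖ := by rw [hwnorm]; ring
      _ ≤ 10^7 * τ^(0+1) * ‖z‖ + 10^7 * τ^2 * ‖z‖^2 := by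
          have h0 : (0:ℝ) ≤ 10^7 * τ^2 * ‖z‖^2 := by positivity
          linarith
  · -- l = 1
    have key := master1 w hw him' hre'
    have hid : bdf2 τ (Complex.exp (-w)) * (gammaL 1 (Complex.exp (-w)) / ((Nat.factorial 1 : ℕ) : ℂ))
        * (τ:ℂ)^(1+1) - z ^ (-(1:ℕ):ℤ)
        = (τ:ℂ) * (Complex.exp (-w)*(3-Complex.exp (-w))/(2*(1-Complex.exp (-w))) - w⁻¹) := by
      simp only [gammaL, if_neg one_ne_zero, if_true, ite_true, Nat.factorial_one, Nat.cast_one]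
      rw [zpow_neg_one, bdf2, hwdef]
      field_simp [h1E'', hτC, hz0]
      ring
    rw [hid, norm_mul, Complex.norm_real, Real.norm_eq_abs, abs_of_pos hτ]
    have hz1 : ‖z‖ ^ ((2:ℤ) - ((1:ℕ):ℤ)) = ‖z‖ := by
      rw [show ((2:ℤ) - ((1:ℕ):ℤ)) = ((1:ℕ):ℤ) by norm_num, zpow_natCast, pow_one]
    rw [hz1]
    calc τ * ‖Complex.exp (-w)*(3-Complex.exp (-w))/(2*(1-Complex.exp (-w))) - w⁻¹‖
        ≤ τ * (10^7 * ‖w‖) := by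
          exact mul_le_mul_of_nonneg_left key hτ.le
      _ = 10^7 * τ^2 * ‖z‖ := by rw [hwnorm]; ring
      _ ≤ 10^7 * τ^(1+1) * ‖z‖ + 10^7 * τ^2 * ‖z‖ := by
          have : (0:ℝ) ≤ 10^7 * τ^(1+1) * ‖z‖ := by positivity
          linarith
  · -- l = 2
    have key := master2 w hw him' hre'
    have hid : bdf2 τ (Complex.exp (-w)) * (gammaL 2 (Complex.exp (-w)) / ((Nat.factorial 2 : ℕ) : ℂ))
        * (τ:ℂ)^(2+1) - z ^ (-(2:ℕ):ℤ)
        = (τ:ℂ)^2 * (Complex.exp (-w)*(3-Complex.exp (-w))*(1+Complex.exp (-w))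
            /(4*(1-Complex.exp (-w))^2) - ((z*(τ:ℂ))^2)⁻¹) := by
      rw [show ((Nat.factorial 2 : ℕ) : ℂ) = 2 by norm_num [Nat.factorial]]
      simp only [gammaL, if_neg (by norm_num : (2:ℕ) ≠ 0), if_neg (by norm_num : (2:ℕ) ≠ 1)]
      rw [show (-((2:ℕ):ℤ)) = -2 by norm_num, zpow_neg,
        show ((2:ℤ)) = ((2:ℕ):ℤ) from rfl, zpow_natCast, bdf2, hwdef]
      field_simp [h1E'', hτC, hz0]
      ring
    rw [← hwdef] at hid
    rw [hid, norm_mul, norm_pow, Complex.norm_real, Real.norm_eq_abs, abs_of_pos hτ]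
    have hz0' : ‖z‖ ^ ((2:ℤ) - ((2:ℕ):ℤ)) = 1 := by
      rw [show ((2:ℤ) - ((2:ℕ):ℤ)) = (0:ℤ) by norm_num, zpow_zero]
    rw [hz0']
    calc τ^2 * ‖Complex.exp (-w)*(3-Complex.exp (-w))*(1+Complex.exp (-w))
            /(4*(1-Complex.exp (-w))^2) - (w^2)⁻¹‖
        ≤ τ^2 * 10^7 := mul_le_mul_of_nonneg_left key (by positivity)
      _ = 10^7 * τ^2 * 1 := by ring
      _ ≤ 10^7 * τ^(2+1) * ‖z‖ + 10^7 * τ^2 * 1 := by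
          have : (0:ℝ) ≤ 10^7 * τ^(2+1) * ‖z‖ := by positivity
          linarith
end
end

section
/- Let μ > 0 with μ ∉ ℤ. There exists θ₀ ∈ (π/2, π) such that for every θ ∈ (π/2, θ₀) there is a constant c > 0 with the following property: for every τ > 0 and every z ∈ ℂ with Re z > 0 and |zτ| ≤ π/sin θ, | τ · Σ_{n=1}^∞ ((nτ)^{μ+1}/(μ+1)) e^{−nzτ} − Γ(μ+1) z^{−μ−2} | ≤ c τ^{μ+2}. -/
/-!
With `w = zτ` and `a = μ + 1`, the difference equals `τ ^ (μ + 2) / (μ + 1)` times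
`∑_{n ≥ 1} n ^ a e^{-nw} - Γ(a + 1) w ^ (-a - 1)`, so it suffices to bound the latter uniformly for
`‖w‖ ≤ M := π / sin θ`. Poisson summation applied to `x ↦ x₊ ^ a e^{-wx}`, whose Fourier transform
is `Γ(a + 1) (w + 2πiξ) ^ (-a - 1)`, gives the Lipschitz summation formula
`∑_{n ≥ 1} n ^ a e^{-nw} = ∑_{k ∈ ℤ} Γ(a + 1) (w + 2πik) ^ (-a - 1)`.
Its `k = 0` term is `Γ(a + 1) w ^ (-a - 1)`, and for `k ≠ 0` we have `‖w + 2πik‖ ≥ (2π - M) |k|`,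
which bounds the rest as soon as `M < 2π`, i.e. for `θ < θ₀ = 5π/6`.
-/

open MeasureTheory Real Set

noncomputable section

open Filter Asymptotics Topology
open scoped Complex FourierTransform

theorem integrableOn_rpow_mul_exp_neg_mul {a b : ℝ} (ha : -1 < a) (hb : 0 < b) :
    IntegrableOn (fun t : ℝ => t ^ a * Real.exp (-b * t)) (Ioi 0) := by
  simpa using integrableOn_rpow_mul_exp_neg_mul_rpow ha one_pos hb

theorem integrableOn_rpow_mul_cexp_neg_mul {a : ℝ} (ha : -1 < a) {b : ℂ} (hb : 0 < b.re) :
    IntegrableOn (fun t : ℝ => ((t ^ a : ℝ) : ℂ) * cexp (-b * t)) (Ioi 0) := by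
  refine (integrableOn_rpow_mul_exp_neg_mul ha hb).mono'
    (by fun_prop : Measurable _).aestronglyMeasurable ?_
  filter_upwards [ae_restrict_mem measurableSet_Ioi] with t ht
  simp [Complex.norm_exp, abs_of_nonneg (rpow_nonneg (le_of_lt ht) a)]

theorem hasDerivAt_integral_rpow_mul_cexp_neg_mul {a : ℝ} (ha : -1 < a) {c : ℂ} (hc : 0 < c.re) :
    HasDerivAt (fun c : ℂ => ∫ t in Ioi (0:ℝ), ((t ^ a : ℝ) : ℂ) * cexp (-c * t))
      (∫ t in Ioi (0:ℝ), ((t ^ a : ℝ) : ℂ) * (cexp (-c * t) * -t)) c := by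
  have hδ : 0 < c.re / 2 := half_pos hc
  refine (hasDerivAt_integral_of_dominated_loc_of_deriv_le (μ := volume.restrict (Ioi 0))
    (F := fun c (t : ℝ) => ((t ^ a : ℝ) : ℂ) * cexp (-c * t))
    (F' := fun c (t : ℝ) => ((t ^ a : ℝ) : ℂ) * (cexp (-c * t) * -t))
    (Metric.ball_mem_nhds c hδ)
    (Eventually.of_forall fun c' => (by fun_prop : Measurable _).aestronglyMeasurable)
    (integrableOn_rpow_mul_cexp_neg_mul ha hc) (by fun_prop : Measurable _).aestronglyMeasurable
    (bound := fun t => t ^ (a + 1) * Real.exp (-(c.re / 2) * t)) ?_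
    (integrableOn_rpow_mul_exp_neg_mul (by linarith) hδ) ?_).2
  · filter_upwards [ae_restrict_mem measurableSet_Ioi] with t (ht : 0 < t) c' hc'
    have hre : c.re / 2 ≤ c'.re := by
      have := (abs_le.mp ((Complex.abs_re_le_norm (c' - c)).trans
        (mem_ball_iff_norm.mp hc').le)).1
      simp only [Complex.sub_re] at this
      linarith
    simp only [norm_mul, norm_neg, Complex.norm_exp, Complex.norm_real, Real.norm_eq_abs,
      abs_of_nonneg (rpow_nonneg ht.le a), abs_of_pos ht, rpow_add ht, rpow_one]
    calc _ = t ^ a * t * Real.exp (-c'.re * t) := by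
          rw [Complex.re_mul_ofReal, Complex.neg_re]; ring
      _ ≤ _ := by gcongr
  · filter_upwards with t c' _
    exact (((hasDerivAt_neg c').mul_const (t : ℂ)).cexp.const_mul _).congr_deriv (by ring)

/-- Both sides are holomorphic in `b` on the right half-plane and agree for real `b` (the Gamma
integral), hence everywhere. -/
theorem integral_rpow_mul_cexp_neg_mul {a : ℝ} (ha : -1 < a) {b : ℂ} (hb : 0 < b.re) :
    ∫ t in Ioi (0:ℝ), ((t ^ a : ℝ) : ℂ) * cexp (-b * t) =
      Complex.Gamma (a + 1) * b ^ (-(a:ℂ) - 1) := by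
  have hU : IsOpen {c : ℂ | 0 < c.re} := isOpen_lt continuous_const Complex.continuous_re
  have hL : AnalyticOnNhd ℂ (fun c : ℂ => ∫ t in Ioi (0:ℝ), ((t ^ a : ℝ) : ℂ) * cexp (-c * t))
      {c | 0 < c.re} := DifferentiableOn.analyticOnNhd (fun c hc =>
    (hasDerivAt_integral_rpow_mul_cexp_neg_mul ha hc).differentiableAt.differentiableWithinAt) hU
  have hR : AnalyticOnNhd ℂ (fun c : ℂ => Complex.Gamma (a + 1) * c ^ (-(a:ℂ) - 1))
      {c | 0 < c.re} := DifferentiableOn.analyticOnNhd (fun c hc =>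
    ((differentiableAt_id.cpow (differentiableAt_const _) (Or.inl hc)).const_mul
      _).differentiableWithinAt) hU
  have hreal : ∀ r : ℝ, 0 < r → ∫ t in Ioi (0:ℝ), ((t ^ a : ℝ) : ℂ) * cexp (-r * t) =
      Complex.Gamma (a + 1) * (r : ℂ) ^ (-(a:ℂ) - 1) := by
    intro r hr
    have hGamma := Complex.integral_cpow_mul_exp_neg_mul_Ioi (a := a + 1) (by simp; linarith) hr
    have harg : (r : ℂ).arg ≠ π := by simp [Complex.arg_ofReal_of_nonneg hr.le, pi_ne_zero.symm]
    rw [one_div, Complex.inv_cpow _ _ harg, ← Complex.cpow_neg, mul_comm, neg_add'] at hGamma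
    rw [← hGamma]
    refine setIntegral_congr_fun measurableSet_Ioi fun t (ht : 0 < t) => ?_
    simp [← Complex.ofReal_cpow ht.le]
  have hfreq : ∃ᶠ c in 𝓝[≠] (1 : ℂ), (∫ t in Ioi (0:ℝ), ((t ^ a : ℝ) : ℂ) * cexp (-c * t)) =
      Complex.Gamma (a + 1) * c ^ (-(a:ℂ) - 1) := by
    have htend : Tendsto (fun r : ℝ => (r : ℂ)) (𝓝[>] 1) (𝓝[≠] 1) := by
      simpa using Complex.continuous_ofReal.continuousWithinAt.tendsto_nhdsWithin
        (s := Ioi 1) (x := 1) (t := {1}ᶜ) fun r hr => by simpa using (mem_Ioi.mp hr).ne'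
    exact htend.frequently (eventually_nhdsWithin_of_forall fun r hr =>
      hreal r (by linarith [mem_Ioi.mp hr])).frequently
  exact hL.eqOn_of_preconnected_of_frequently_eq hR (convex_halfSpace_re_gt 0).isPreconnected
    (by simp) hfreq hb

def oneSidedRpowCexp (a : ℝ) (w : ℂ) (x : ℝ) : ℂ := ((max x 0 ^ a : ℝ) : ℂ) * cexp (-w * x)

section oneSidedRpowCexp

variable {a : ℝ} {w : ℂ}

theorem oneSidedRpowCexp_of_nonpos (ha : a ≠ 0) {x : ℝ} (hx : x ≤ 0) :
    oneSidedRpowCexp a w x = 0 := by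
  simp [oneSidedRpowCexp, max_eq_right hx, zero_rpow ha]

theorem oneSidedRpowCexp_of_nonneg {x : ℝ} (hx : 0 ≤ x) :
    oneSidedRpowCexp a w x = ((x ^ a : ℝ) : ℂ) * cexp (-w * x) := by
  simp [oneSidedRpowCexp, max_eq_left hx]

theorem continuous_oneSidedRpowCexp (ha : 0 ≤ a) : Continuous (oneSidedRpowCexp a w) := by
  unfold oneSidedRpowCexp
  have : Continuous fun x : ℝ => max x 0 ^ a :=
    (continuous_id.max continuous_const).rpow_const fun _ => Or.inr ha
  fun_prop

theorem oneSidedRpowCexp_isBigO_cocompact (ha : a ≠ 0) (hw : 0 < w.re) (b : ℝ) :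
    oneSidedRpowCexp a w =O[cocompact ℝ] (|·| ^ (-b)) := by
  rw [cocompact_eq_atBot_atTop, isBigO_sup]
  constructor
  · have hzero : oneSidedRpowCexp a w =ᶠ[atBot] 0 :=
      (eventually_le_atBot 0).mono fun x hx => oneSidedRpowCexp_of_nonpos ha hx
    exact hzero.trans_isBigO (isBigO_zero _ _)
  · rw [← isBigO_norm_left]
    refine ((isBigO_refl (fun x : ℝ => x ^ a) atTop).mul
      (isLittleO_exp_neg_mul_rpow_atTop hw (-b - a)).isBigO).congr' ?_ ?_
    · filter_upwards [eventually_gt_atTop 0] with x hx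
      simp [oneSidedRpowCexp_of_nonneg hx.le, Complex.norm_exp, abs_of_nonneg (rpow_nonneg hx.le a)]
    · filter_upwards [eventually_gt_atTop 0] with x hx
      rw [← rpow_add hx, abs_of_pos hx]
      ring_nf

theorem fourier_oneSidedRpowCexp (ha : 0 < a) (hw : 0 < w.re) (ξ : ℝ) :
    𝓕 (oneSidedRpowCexp a w) ξ =
      Complex.Gamma (a + 1) * (w + 2 * π * Complex.I * ξ) ^ (-(a:ℂ) - 1) := by
  rw [Real.fourier_real_eq_integral_exp_smul, ← setIntegral_eq_integral_of_forall_compl_eq_zero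
    (s := Ioi 0) fun x hx => by rw [oneSidedRpowCexp_of_nonpos ha.ne' (not_lt.mp hx), smul_zero],
    ← integral_rpow_mul_cexp_neg_mul (by linarith) (by simpa using hw)]
  refine setIntegral_congr_fun measurableSet_Ioi fun x (hx : 0 < x) => ?_
  rw [oneSidedRpowCexp_of_nonneg hx.le, smul_eq_mul, mul_left_comm, ← Complex.exp_add]
  congr 2
  push_cast
  ring

end oneSidedRpowCexp

theorem norm_add_two_pi_I_mul_ge (w : ℂ) (ξ : ℝ) :
    2 * π * |ξ| - ‖w‖ ≤ ‖w + 2 * π * Complex.I * ξ‖ := by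
  have h := norm_sub_norm_le (2 * π * Complex.I * ξ) (-w)
  simp only [norm_neg, sub_neg_eq_add] at h
  simpa [abs_of_pos pi_pos, add_comm] using h

theorem fourier_oneSidedRpowCexp_isBigO_cocompact {a : ℝ} {w : ℂ} (ha : 0 < a) (hw : 0 < w.re) :
    𝓕 (oneSidedRpowCexp a w) =O[cocompact ℝ] (|·| ^ (-(a + 1))) := by
  refine IsBigO.of_bound ‖Complex.Gamma (a + 1)‖ ?_
  filter_upwards [tendsto_norm_cocompact_atTop.eventually_ge_atTop (max 1 ‖w‖)] with ξ hξ
  rw [Real.norm_eq_abs, max_le_iff] at hξ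
  obtain ⟨hξ1, hξw⟩ := hξ
  have hnorm : |ξ| ≤ ‖w + 2 * π * Complex.I * ξ‖ := by
    nlinarith [norm_add_two_pi_I_mul_ge w ξ, pi_gt_three]
  rw [fourier_oneSidedRpowCexp ha hw, norm_mul,
    show -(a:ℂ) - 1 = ((-(a + 1) : ℝ) : ℂ) by push_cast; ring, Complex.norm_cpow_real,
    Real.norm_eq_abs, abs_of_nonneg (rpow_nonneg (abs_nonneg ξ) _)]
  exact mul_le_mul_of_nonneg_left
    (rpow_le_rpow_of_nonpos (by linarith) hnorm (by linarith)) (norm_nonneg _)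

/-- The Lipschitz summation formula, by Poisson summation of `oneSidedRpowCexp a w`. -/
theorem hasSum_Gamma_mul_cpow_add_two_pi_I_mul {a : ℝ} {w : ℂ} (ha : 0 < a) (hw : 0 < w.re) :
    HasSum (fun k : ℤ => Complex.Gamma (a + 1) * (w + 2 * π * Complex.I * k) ^ (-(a:ℂ) - 1))
      (∑' n : ℕ, (((n + 1 : ℝ) ^ a : ℝ) : ℂ) * cexp (-w * (n + 1))) := by
  have hsum : Summable fun k : ℤ => 𝓕 (oneSidedRpowCexp a w) k :=
    summable_of_isBigO (Real.summable_abs_int_rpow (by linarith : 1 < a + 1))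
      ((fourier_oneSidedRpowCexp_isBigO_cocompact ha hw).comp_tendsto Int.tendsto_coe_cofinite)
  have hpoisson := Real.tsum_eq_tsum_fourier_of_rpow_decay (continuous_oneSidedRpowCexp ha.le)
    (by linarith : 1 < a + 1) (oneSidedRpowCexp_isBigO_cocompact ha.ne' hw _)
    (fourier_oneSidedRpowCexp_isBigO_cocompact ha hw) 0
  have hshift : ∑' n : ℤ, oneSidedRpowCexp a w n =
      ∑' n : ℕ, (((n + 1 : ℝ) ^ a : ℝ) : ℂ) * cexp (-w * (n + 1)) := by
    rw [← (show Function.Injective fun n : ℕ => (n : ℤ) + 1 by intro m n h; simpa using h).tsum_eq]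
    · refine tsum_congr fun n => ?_
      rw [oneSidedRpowCexp_of_nonneg (by positivity)]
      push_cast
      ring_nf
    · intro n hn
      have hpos : 0 < n := by
        by_contra! hle
        exact hn (oneSidedRpowCexp_of_nonpos ha.ne' (by exact_mod_cast hle))
      exact ⟨(n - 1).toNat, by simp only; omega⟩
  simp only [zero_add, QuotientAddGroup.mk_zero, fourier_eval_zero, mul_one, hshift] at hpoisson
  rw [hpoisson]
  convert hsum.hasSum using 2 with k
  rw [fourier_oneSidedRpowCexp ha hw]
  push_cast
  rfl

/-- The `k = 0` summand of the bound is `|0| ^ (-(a + 1)) = 0`. -/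
theorem norm_tsum_rpow_mul_cexp_sub_Gamma_mul_cpow_le {a M : ℝ} {w : ℂ} (ha : 0 < a)
    (hw : 0 < w.re) (hM : M < 2 * π) (hwM : ‖w‖ ≤ M) :
    ‖∑' n : ℕ, (((n + 1 : ℝ) ^ a : ℝ) : ℂ) * cexp (-w * (n + 1)) -
        Complex.Gamma (a + 1) * w ^ (-(a:ℂ) - 1)‖ ≤
      ‖Complex.Gamma (a + 1)‖ * (2 * π - M) ^ (-(a + 1)) * ∑' k : ℤ, |(k:ℝ)| ^ (-(a + 1)) := by
  have hlip := hasSum_Gamma_mul_cpow_add_two_pi_I_mul ha hw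
  rw [← hlip.tsum_eq, hlip.summable.tsum_eq_add_tsum_ite 0]
  simp only [Int.cast_zero, mul_zero, add_zero, add_sub_cancel_left]
  refine tsum_of_norm_bounded
    ((Real.summable_abs_int_rpow (by linarith : 1 < a + 1)).hasSum.mul_left _) fun k => ?_
  split_ifs with hk
  · simp only [hk, norm_zero, Int.cast_zero, abs_zero, zero_rpow (by linarith : -(a + 1) ≠ 0),
      mul_zero, le_refl]
  have hk1 : (1 : ℝ) ≤ |(k:ℝ)| := by exact_mod_cast Int.one_le_abs hk
  have hnorm : (2 * π - M) * |(k:ℝ)| ≤ ‖w + 2 * π * Complex.I * k‖ := by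
    have h := norm_add_two_pi_I_mul_ge w k
    push_cast at h
    nlinarith [mul_le_mul_of_nonneg_left hk1 ((norm_nonneg w).trans hwM)]
  rw [norm_mul, show -(a:ℂ) - 1 = ((-(a + 1) : ℝ) : ℂ) by push_cast; ring,
    Complex.norm_cpow_real, mul_assoc ‖_‖, ← mul_rpow (by linarith) (abs_nonneg _)]
  exact mul_le_mul_of_nonneg_left
    (rpow_le_rpow_of_nonpos (by nlinarith) hnorm (by linarith)) (norm_nonneg _)

theorem Complex.ofReal_mul_cpow {r : ℝ} (hr : 0 < r) (v e : ℂ) :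
    ((r : ℂ) * v) ^ e = (r : ℂ) ^ e * v ^ e := by
  rcases eq_or_ne v 0 with rfl | hv
  · rcases eq_or_ne e 0 with rfl | he
    · simp
    · simp [Complex.zero_cpow he]
  have hr0 : (r : ℂ) ≠ 0 := by exact_mod_cast hr.ne'
  rw [Complex.cpow_def_of_ne_zero (mul_ne_zero hr0 hv), Complex.cpow_def_of_ne_zero hr0,
    Complex.cpow_def_of_ne_zero hv, ← Complex.exp_add, Complex.log_ofReal_mul hr hv,
    ← Complex.ofReal_log hr.le, add_mul]

theorem mul_tsum_sub_Gamma_mul_cpow_eq {μ τ : ℝ} (hμ : μ + 1 ≠ 0) (hτ : 0 < τ) (z : ℂ) :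
    (τ:ℂ) * ∑' n : ℕ,
        (((((n:ℝ)+1)*τ) ^ (μ+1) / (μ+1) : ℝ) : ℂ) * cexp (-((n:ℂ)+1) * z * τ)
      - (Real.Gamma (μ+1) : ℂ) * z ^ (-(μ:ℂ) - 2) =
    ((τ ^ (μ + 2) / (μ + 1) : ℝ) : ℂ) *
      (∑' n : ℕ, (((n + 1 : ℝ) ^ (μ + 1) : ℝ) : ℂ) * cexp (-(z * τ) * (n + 1)) -
        Complex.Gamma ((μ + 1 : ℝ) + 1) * (z * τ) ^ (-((μ + 1 : ℝ) : ℂ) - 1)) := by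
  have hτ2 : τ ^ (μ + 2) = τ ^ (μ + 1) * τ := by
    rw [show μ + 2 = μ + 1 + 1 by ring, rpow_add_one hτ.ne']
  have hsum : (τ:ℂ) * ∑' n : ℕ,
        (((((n:ℝ)+1)*τ) ^ (μ+1) / (μ+1) : ℝ) : ℂ) * cexp (-((n:ℂ)+1) * z * τ) =
      ((τ ^ (μ + 2) / (μ + 1) : ℝ) : ℂ) *
        ∑' n : ℕ, (((n + 1 : ℝ) ^ (μ + 1) : ℝ) : ℂ) * cexp (-(z * τ) * (n + 1)) := by
    rw [← tsum_mul_left, ← tsum_mul_left]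
    refine tsum_congr fun n => ?_
    rw [mul_rpow (by positivity) hτ.le, hτ2]
    push_cast
    ring_nf
  have hpow : z ^ (-(μ:ℂ) - 2) = ((τ ^ (μ + 2) : ℝ) : ℂ) * (z * τ) ^ (-((μ + 1 : ℝ) : ℂ) - 1) := by
    have hz : z = ((τ⁻¹ : ℝ) : ℂ) * (z * τ) := by
      have : (τ : ℂ) ≠ 0 := by exact_mod_cast hτ.ne'
      push_cast
      field_simp
    rw [show -(μ:ℂ) - 2 = ((-(μ + 2) : ℝ) : ℂ) by push_cast; ring,
      show -((μ + 1 : ℝ) : ℂ) - 1 = ((-(μ + 2) : ℝ) : ℂ) by push_cast; ring]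
    conv_lhs => rw [hz]
    rw [Complex.ofReal_mul_cpow (inv_pos.mpr hτ), ← Complex.ofReal_cpow (inv_pos.mpr hτ).le,
      inv_rpow hτ.le, rpow_neg hτ.le, inv_inv]
  have hGamma : Complex.Gamma ((μ + 1 : ℝ) + 1) = (μ + 1) * (Real.Gamma (μ + 1) : ℂ) := by
    rw [Complex.Gamma_add_one _ (by exact_mod_cast hμ), Complex.Gamma_ofReal]
    push_cast; ring
  have hμc : (μ : ℂ) + 1 ≠ 0 := by exact_mod_cast hμ
  rw [hsum, hpow, hGamma, mul_sub]
  congr 1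
  push_cast
  field_simp

theorem pi_div_sin_lt_two_pi {θ : ℝ} (h1 : π / 2 < θ) (h2 : θ < 5 * π / 6) :
    π / Real.sin θ < 2 * π := by
  have hsin : 1 / 2 < Real.sin θ := by
    rw [← sin_pi_sub, ← sin_pi_div_six]
    exact sin_lt_sin_of_lt_of_le_pi_div_two (by linarith [pi_pos]) (by linarith) (by linarith)
  rw [div_lt_iff₀ (by linarith)]
  nlinarith [pi_pos]

theorem stmt_11_general (μ : ℝ) (hμ : 0 < μ) :
    ∃ θ₀ ∈ Set.Ioo (π/2) π, ∀ θ ∈ Set.Ioo (π/2) θ₀,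
      ∃ c > (0:ℝ), ∀ τ > (0:ℝ), ∀ z : ℂ, 0 < z.re → ‖z * (τ:ℂ)‖ ≤ π / Real.sin θ →
        ‖(τ:ℂ) * ∑' n : ℕ,
              (((((n:ℝ)+1)*τ) ^ (μ+1) / (μ+1) : ℝ) : ℂ) * Complex.exp (-((n:ℂ)+1) * z * τ)
            - (Real.Gamma (μ+1) : ℂ) * z ^ (-(μ:ℂ) - 2)‖ ≤ c * τ ^ (μ+2) := by
  refine ⟨5 * π / 6, ⟨by linarith [pi_pos], by linarith [pi_pos]⟩, fun θ ⟨hθ1, hθ2⟩ => ?_⟩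
  have hM : π / Real.sin θ < 2 * π := pi_div_sin_lt_two_pi hθ1 hθ2
  set K := ∑' k : ℤ, |(k:ℝ)| ^ (-(μ + 1 + 1))
  have hK : 0 < K := (Real.summable_abs_int_rpow (by linarith)).tsum_pos (fun k => by positivity) 1
    (by norm_num)
  have hGamma := Complex.Gamma_ne_zero_of_re_pos (s := ((μ + 1 : ℝ) : ℂ) + 1) (by simp; linarith)
  have hgap : 0 < 2 * π - π / Real.sin θ := by linarith
  refine ⟨‖Complex.Gamma ((μ + 1 : ℝ) + 1)‖ * (2 * π - π / Real.sin θ) ^ (-(μ + 1 + 1)) * K /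
    (μ + 1), by positivity, fun τ hτ z hz hzτ => ?_⟩
  have hw : 0 < (z * τ).re := by simpa using mul_pos hz hτ
  rw [mul_tsum_sub_Gamma_mul_cpow_eq (by linarith) hτ, norm_mul, Complex.norm_real,
    Real.norm_of_nonneg (by positivity)]
  calc _ ≤ τ ^ (μ + 2) / (μ + 1) *
        (‖Complex.Gamma ((μ + 1 : ℝ) + 1)‖ * (2 * π - π / Real.sin θ) ^ (-(μ + 1 + 1)) * K) := by
        gcongr
        exact norm_tsum_rpow_mul_cexp_sub_Gamma_mul_cpow_le (by linarith) hw hM hzτ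
    _ = _ := by ring

theorem stmt_11 (μ : ℝ) (hμ : 0 < μ) (hμ2 : ¬ ∃ k : ℤ, μ = k) :
    ∃ θ₀ ∈ Set.Ioo (π/2) π, ∀ θ ∈ Set.Ioo (π/2) θ₀,
      ∃ c > (0:ℝ), ∀ τ > (0:ℝ), ∀ z : ℂ, 0 < z.re → ‖z * (τ:ℂ)‖ ≤ π / Real.sin θ →
        ‖(τ:ℂ) * ∑' n : ℕ,
              (((((n:ℝ)+1)*τ) ^ (μ+1) / (μ+1) : ℝ) : ℂ) * Complex.exp (-((n:ℂ)+1) * z * τ)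
            - (Real.Gamma (μ+1) : ℂ) * z ^ (-(μ:ℂ) - 2)‖ ≤ c * τ ^ (μ+2) :=
  stmt_11_general μ hμ
end
end
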